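/- Let 1 ≤ p ≤ ∞ and let q be its Hölder conjugate (1/p + 1/q = 1). Let H_Ω^{B̃,p} be the class of generalized trigonometric polynomials f(x) = a₀/2 + Σ_{ω∈Ω₊} (a_ω cos(ω·x) + b_ω sin(ω·x)) on [0,2π)^d whose coefficient vector (a₀, (a_ω)_{ω∈Ω₊}, (b_ω)_{ω∈Ω₊}) ∈ ℝ^{|Ω|} has p-norm at most B̃. Then for every m ≥ 1 and every tuple x₁, …, x_m ∈ [0,2π)^d, the empirical Rademacher complexity satisfies R̂_{(x₁,…,x_m)}(H_Ω^{B̃,p}) ≤ B̃/√m + 2·B̃·|Ω|^{1/q}·√(2·log(|Ω|))/√m. -/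

import Mathlib

open Real MeasureTheory
open scoped ENNReal NNReal BigOperators

noncomputable section

/-- The domain `[0, 2π)^d`. -/
def box (d : ℕ) : Set (Fin d → ℝ) := Set.univ.pi fun _ => Set.Ico 0 (2 * π)

/-- Euclidean dot product `ω · x`. -/
def dot {d : ℕ} (ω x : Fin d → ℝ) : ℝ := ∑ j, ω j * x j

/-- The sign `±1` associated with a Boolean. -/
def signOf (b : Bool) : ℝ := if b then 1 else -1

/-- Empirical Rademacher complexity of a class `F` of real-valued functions with
respect to the sample points `x₁, …, x_m`:
`2^{-m} Σ_{σ ∈ {−1,1}^m} sup_{f ∈ F} (1/m) Σ_i σ_i f(x_i)`. -/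
def empRad {X : Type*} {m : ℕ} (F : Set (X → ℝ)) (x : Fin m → X) : ℝ :=
  (1 / 2 ^ m) * ∑ σ : Fin m → Bool,
    sSup ((fun f => (1 / (m : ℝ)) * ∑ i, signOf (σ i) * f (x i)) '' F)

/-- The Euclidean 2-norm of the coefficient vector `(a₀, (a_ω)_{ω∈Ω₊}, (b_ω)_{ω∈Ω₊})`. -/
def coeffNorm2 {d : ℕ} (Ωp : Finset (Fin d → ℝ)) (a0 : ℝ) (a b : (Fin d → ℝ) → ℝ) : ℝ :=
  Real.sqrt (a0 ^ 2 + ∑ ω ∈ Ωp, (a ω ^ 2 + b ω ^ 2))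

/-- The generalized trigonometric polynomial with frequencies in `Ω₊` and
coefficients `a₀, (a_ω), (b_ω)`:
`x ↦ a₀/2 + Σ_{ω∈Ω₊} (a_ω cos(ω·x) + b_ω sin(ω·x))`. -/
def gtp {d : ℕ} (Ωp : Finset (Fin d → ℝ)) (a0 : ℝ) (a b : (Fin d → ℝ) → ℝ) :
    (Fin d → ℝ) → ℝ :=
  fun x => a0 / 2 + ∑ ω ∈ Ωp, (a ω * Real.cos (dot ω x) + b ω * Real.sin (dot ω x))

/-- The class `H_Ω^{B̃}` of generalized trigonometric polynomials with frequencies in `Ω₊`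
whose coefficient vector has Euclidean 2-norm at most `B̃`. -/
def Hclass {d : ℕ} (Ωp : Finset (Fin d → ℝ)) (Bt : ℝ) : Set ((Fin d → ℝ) → ℝ) :=
  { f | ∃ a0 a b, coeffNorm2 Ωp a0 a b ≤ Bt ∧ f = gtp Ωp a0 a b }

/-- `K = Σ_{i=1}^d max_{ω∈Ω₊} |ω_i|`. -/
def Kconst {d : ℕ} (Ωp : Finset (Fin d → ℝ)) (hne : Ωp.Nonempty) : ℝ :=
  ∑ i, Ωp.sup' hne fun ω => |ω i|

end

noncomputable section

/-- The coefficient vector `(a₀, (a_ω)_{ω∈Ω₊}, (b_ω)_{ω∈Ω₊})` of a generalized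
trigonometric polynomial, as a vector in `ℝ^{|Ω|}` with `|Ω| = 2|Ω₊| + 1`. -/
def coeffVec {d : ℕ} (Ωp : Finset (Fin d → ℝ)) (a0 : ℝ) (a b : (Fin d → ℝ) → ℝ) :
    Unit ⊕ ({ω // ω ∈ Ωp} × Bool) → ℝ
  | Sum.inl _ => a0
  | Sum.inr (ω, false) => a ω.1
  | Sum.inr (ω, true) => b ω.1

/-- The `p`-norm of the coefficient vector (with the max-norm for `p = ∞`). -/
def coeffNormP (p : ℝ≥0∞) [Fact (1 ≤ p)] {d : ℕ} (Ωp : Finset (Fin d → ℝ))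
    (a0 : ℝ) (a b : (Fin d → ℝ) → ℝ) : ℝ :=
  ‖(WithLp.equiv p ((Unit ⊕ ({ω // ω ∈ Ωp} × Bool)) → ℝ)).symm (coeffVec Ωp a0 a b)‖

/-- The class `H_Ω^{B̃,p}` of generalized trigonometric polynomials with frequencies in
`Ω₊` whose coefficient vector has `p`-norm at most `B̃`. -/
def HclassP (p : ℝ≥0∞) [Fact (1 ≤ p)] {d : ℕ} (Ωp : Finset (Fin d → ℝ)) (Bt : ℝ) :
    Set ((Fin d → ℝ) → ℝ) :=
  { f | ∃ a0 a b, coeffNormP p Ωp a0 a b ≤ Bt ∧ f = gtp Ωp a0 a b }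

end

noncomputable section RadAux
open Finset

lemma signOf_true : signOf true = 1 := rfl

lemma signOf_false : signOf false = -1 := rfl

lemma signOf_mul_self (b : Bool) : signOf b * signOf b = 1 := by
  cases b <;> norm_num [signOf]

lemma signOf_not (b : Bool) : signOf (!b) = - signOf b := by
  cases b <;> norm_num [signOf]

lemma sum_pi_bool_prod {m : ℕ} (g : Fin m → Bool → ℝ) :
    ∑ σ : Fin m → Bool, ∏ i, g i (σ i) = ∏ i, (g i false + g i true) := by
  induction m with
  | zero => simp
  | succ n ih =>
    rw [← (Fin.consEquiv (fun _ : Fin (n+1) => Bool)).sum_comp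
      (fun σ => ∏ i, g i (σ i)), Fintype.sum_prod_type]
    have h : ∀ (b : Bool) (σ : Fin n → Bool),
        (∏ i, g i ((Fin.consEquiv (fun _ : Fin (n+1) => Bool)) (b, σ) i))
          = g 0 b * ∏ i : Fin n, g i.succ (σ i) := by
      intro b σ
      rw [Fin.prod_univ_succ]
      simp [Fin.consEquiv]
    simp_rw [h]
    calc ∑ b : Bool, ∑ σ : Fin n → Bool, g 0 b * ∏ i : Fin n, g i.succ (σ i)
        = (∑ b : Bool, g 0 b) * ∑ σ : Fin n → Bool, ∏ i : Fin n, g i.succ (σ i) := by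
          rw [Finset.sum_mul]
          exact Finset.sum_congr rfl fun b _ => (Finset.mul_sum _ _ _).symm
      _ = (g 0 false + g 0 true) * ∏ i : Fin n, (g i.succ false + g i.succ true) := by
          rw [Fintype.sum_bool, ih (fun i b => g i.succ b)]; ring
      _ = ∏ i : Fin (n+1), (g i false + g i true) := by
          rw [Fin.prod_univ_succ]

lemma sum_signOf_orth {m : ℕ} (i k : Fin m) :
    ∑ σ : Fin m → Bool, signOf (σ i) * signOf (σ k)
      = if i = k then (2:ℝ)^m else 0 := by
  rcases eq_or_ne i k with rfl | hik
  · rw [if_pos rfl]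
    rw [Finset.sum_congr rfl (fun σ _ => signOf_mul_self (σ i))]
    simp [Finset.card_univ]
  · rw [if_neg hik]
    apply Finset.sum_ninvolution (fun σ => Function.update σ i (!(σ i)))
    · intro σ
      have h1 : Function.update σ i (!(σ i)) i = !(σ i) := Function.update_self _ _ _
      have h2 : Function.update σ i (!(σ i)) k = σ k :=
        Function.update_of_ne (Ne.symm hik) _ _
      rw [h1, h2, signOf_not]
      ring
    · intro σ _ hgσ
      have := congrFun hgσ i
      rw [Function.update_self] at this
      exact (Bool.not_ne_self (σ i)) this
    · intro σ; exact Finset.mem_univ _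
    · intro σ
      rw [Function.update_self, Bool.not_not, Function.update_idem,
        Function.update_eq_self]

lemma avg_abs_sum_signOf (m : ℕ) :
    (1/2^m : ℝ) * ∑ σ : Fin m → Bool, |∑ i, signOf (σ i)| ≤ Real.sqrt m := by
  have hcard : (Finset.univ : Finset (Fin m → Bool)).card = 2^m := by
    simp [Finset.card_univ]
  have hsq : ∑ σ : Fin m → Bool, (∑ i, signOf (σ i))^2 = m * 2^m := by
    have h1 : ∀ σ : Fin m → Bool, (∑ i, signOf (σ i))^2
        = ∑ i, ∑ k, signOf (σ i) * signOf (σ k) := by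
      intro σ; rw [sq, Finset.sum_mul_sum]
    rw [Finset.sum_congr rfl fun σ _ => h1 σ, Finset.sum_comm]
    have h2 : ∀ i : Fin m, ∑ σ : Fin m → Bool, ∑ k, signOf (σ i) * signOf (σ k)
        = (2:ℝ)^m := by
      intro i
      rw [Finset.sum_comm]
      rw [Finset.sum_congr rfl fun k _ => sum_signOf_orth i k]
      simp
    rw [Finset.sum_congr rfl fun i _ => h2 i]
    simp [Finset.card_univ]
  have hCS := Finset.sum_mul_sq_le_sq_mul_sq Finset.univ
      (fun σ : Fin m → Bool => |∑ i, signOf (σ i)|) (fun _ => (1:ℝ))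
  simp only [mul_one, one_pow, sq_abs, Finset.sum_const, hcard, nsmul_eq_mul] at hCS
  rw [hsq] at hCS
  have hb : (∑ σ : Fin m → Bool, |∑ i, signOf (σ i)|) ≤ Real.sqrt m * 2^m := by
    have h3 : (∑ σ : Fin m → Bool, |∑ i, signOf (σ i)|)^2
        ≤ (Real.sqrt m * 2^m)^2 := by
      rw [mul_pow, Real.sq_sqrt (Nat.cast_nonneg m)]
      calc (∑ σ : Fin m → Bool, |∑ i, signOf (σ i)|)^2
          ≤ (m : ℝ) * 2^m * ((2^m : ℕ) : ℝ) := hCS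
        _ = (m : ℝ) * ((2:ℝ)^m)^2 := by push_cast; ring
    calc (∑ σ : Fin m → Bool, |∑ i, signOf (σ i)|)
        = Real.sqrt ((∑ σ : Fin m → Bool, |∑ i, signOf (σ i)|)^2) :=
          (Real.sqrt_sq (Finset.sum_nonneg fun _ _ => abs_nonneg _)).symm
      _ ≤ Real.sqrt ((Real.sqrt m * 2^m)^2) := Real.sqrt_le_sqrt h3
      _ = Real.sqrt m * 2^m := Real.sqrt_sq (by positivity)
  calc (1/2^m : ℝ) * ∑ σ : Fin m → Bool, |∑ i, signOf (σ i)|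
      ≤ (1/2^m : ℝ) * (Real.sqrt m * 2^m) := by
        apply mul_le_mul_of_nonneg_left hb (by positivity)
    _ = Real.sqrt m := by field_simp

lemma massart_avg {m : ℕ} (hm : 1 ≤ m) {J : Type*} [Fintype J] [Nonempty J]
    (hJ : 2 ≤ Fintype.card J) (u : J → Fin m → ℝ)
    (hu : ∀ j, ∑ i, (u j i)^2 ≤ m) :
    (1/2^m : ℝ) * ∑ σ : Fin m → Bool,
        (Finset.univ.sup' Finset.univ_nonempty fun j => ∑ i, signOf (σ i) * u j i)
      ≤ Real.sqrt (2 * m * Real.log (Fintype.card J)) := by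
  set K : ℝ := (Fintype.card J : ℝ) with hKdef
  have hK2 : (2:ℝ) ≤ K := by rw [hKdef]; exact_mod_cast hJ
  have hK0 : (0:ℝ) < K := by linarith
  have hlogK : 0 < Real.log K := Real.log_pos (by linarith)
  have hm0 : (0:ℝ) < m := by exact_mod_cast hm
  set t : ℝ := Real.sqrt (2 * m * Real.log K) with htdef
  have ht0 : 0 < t := Real.sqrt_pos.mpr (by positivity)
  have ht2 : t^2 = 2 * m * Real.log K := Real.sq_sqrt (by positivity)
  set lam : ℝ := t / m with hlamdef
  have hlam0 : 0 < lam := by positivity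
  set S : (Fin m → Bool) → ℝ := fun σ =>
    Finset.univ.sup' Finset.univ_nonempty fun j => ∑ i, signOf (σ i) * u j i with hSdef
  set A : ℝ := (1/2^m : ℝ) * ∑ σ : Fin m → Bool, S σ with hAdef
  have hcard1 : ∑ _σ : Fin m → Bool, (1/2^m : ℝ) = 1 := by
    rw [Finset.sum_const, Finset.card_univ]
    simp [Fintype.card_fun]
  have key : Real.exp (lam * A) ≤ K * Real.exp (lam^2 * m / 2) := by
    have jensen : Real.exp (lam * A)
        ≤ ∑ σ : Fin m → Bool, (1/2^m : ℝ) * Real.exp (lam * S σ) := by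
      have hj := (convexOn_exp).map_sum_le (t := Finset.univ)
        (w := fun _ : Fin m → Bool => (1/2^m : ℝ)) (p := fun σ => lam * S σ)
        (fun _ _ => by positivity) hcard1 (fun _ _ => Set.mem_univ _)
      simp only [smul_eq_mul] at hj
      have hexp : ∑ σ : Fin m → Bool, (1/2^m : ℝ) * (lam * S σ) = lam * A := by
        rw [hAdef, ← Finset.mul_sum, ← Finset.mul_sum]; ring
      rw [hexp] at hj
      exact hj
    have hsup : ∀ σ : Fin m → Bool, Real.exp (lam * S σ)
        ≤ ∑ j : J, Real.exp (lam * ∑ i, signOf (σ i) * u j i) := by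
      intro σ
      obtain ⟨j₀, _, hj₀⟩ := Finset.exists_mem_eq_sup' (Finset.univ_nonempty)
        (fun j : J => ∑ i, signOf (σ i) * u j i)
      rw [hSdef]
      simp only []
      rw [hj₀]
      exact Finset.single_le_sum
        (f := fun j : J => Real.exp (lam * ∑ i, signOf (σ i) * u j i))
        (fun j _ => (Real.exp_pos _).le) (Finset.mem_univ j₀)
    have hfac : ∀ j : J, ∑ σ : Fin m → Bool, Real.exp (lam * ∑ i, signOf (σ i) * u j i)
        ≤ 2^m * Real.exp (lam^2 * m / 2) := by
      intro j
      have e1 : ∀ σ : Fin m → Bool, Real.exp (lam * ∑ i, signOf (σ i) * u j i)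
          = ∏ i, Real.exp (lam * (signOf (σ i) * u j i)) := by
        intro σ
        rw [← Real.exp_sum, ← Finset.mul_sum]
      calc ∑ σ : Fin m → Bool, Real.exp (lam * ∑ i, signOf (σ i) * u j i)
          = ∑ σ : Fin m → Bool, ∏ i, Real.exp (lam * (signOf (σ i) * u j i)) := by
            exact Finset.sum_congr rfl fun σ _ => e1 σ
        _ = ∏ i, (Real.exp (lam * (signOf false * u j i))
              + Real.exp (lam * (signOf true * u j i))) :=
            sum_pi_bool_prod (fun i b => Real.exp (lam * (signOf b * u j i)))
        _ = ∏ i, 2 * Real.cosh (lam * u j i) := by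
            apply Finset.prod_congr rfl; intro i _
            rw [Real.cosh_eq]
            rw [signOf_true, signOf_false,
              show lam * (-1 * u j i) = -(lam * u j i) by ring,
              show lam * (1 * u j i) = lam * u j i by ring]
            ring
        _ ≤ ∏ i, 2 * Real.exp ((lam * u j i)^2 / 2) := by
            apply Finset.prod_le_prod
            · intro i _; positivity
            · intro i _
              have := Real.cosh_le_exp_half_sq (lam * u j i)
              linarith
        _ = 2^m * Real.exp (∑ i, (lam * u j i)^2 / 2) := by
            rw [Finset.prod_mul_distrib, Finset.prod_const, Real.exp_sum]
            simp [Finset.card_univ]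
        _ ≤ 2^m * Real.exp (lam^2 * m / 2) := by
            have hle : ∑ i, (lam * u j i)^2 / 2 ≤ lam^2 * m / 2 := by
              have : ∑ i, (lam * u j i)^2 / 2 = lam^2/2 * ∑ i, (u j i)^2 := by
                rw [Finset.mul_sum]
                exact Finset.sum_congr rfl fun i _ => by ring
              rw [this]
              have := hu j
              nlinarith [sq_nonneg lam]
            have := Real.exp_le_exp.mpr hle
            nlinarith [Real.exp_pos (∑ i, (lam * u j i)^2 / 2), (by positivity : (0:ℝ) < (2:ℝ)^m)]
    calc Real.exp (lam * A)
        ≤ ∑ σ : Fin m → Bool, (1/2^m : ℝ) * Real.exp (lam * S σ) := jensen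
      _ ≤ ∑ σ : Fin m → Bool, (1/2^m : ℝ)
            * ∑ j : J, Real.exp (lam * ∑ i, signOf (σ i) * u j i) := by
          apply Finset.sum_le_sum; intro σ _
          exact mul_le_mul_of_nonneg_left (hsup σ) (by positivity)
      _ = (1/2^m : ℝ) * ∑ j : J, ∑ σ : Fin m → Bool,
            Real.exp (lam * ∑ i, signOf (σ i) * u j i) := by
          rw [← Finset.mul_sum, Finset.sum_comm]
      _ ≤ (1/2^m : ℝ) * ∑ _j : J, (2:ℝ)^m * Real.exp (lam^2 * m / 2) := by
          apply mul_le_mul_of_nonneg_left _ (by positivity)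
          exact Finset.sum_le_sum fun j _ => hfac j
      _ = K * Real.exp (lam^2 * m / 2) := by
          rw [Finset.sum_const, Finset.card_univ, nsmul_eq_mul, hKdef]
          field_simp
  have h2 : lam * A ≤ Real.log K + lam^2 * m / 2 := by
    have : K * Real.exp (lam^2 * m / 2) = Real.exp (Real.log K + lam^2 * m / 2) := by
      rw [Real.exp_add, Real.exp_log hK0]
    rw [this] at key
    exact Real.exp_le_exp.mp key
  have hlog : Real.log K = t^2 / (2*m) := by
    rw [eq_div_iff (by positivity)]; linarith [ht2]
  have h3 : lam * A ≤ lam * t := by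
    have heq : Real.log K + lam^2 * m / 2 = lam * t := by
      rw [hlog, hlamdef]
      field_simp
      ring
    linarith [h2, heq.le]
  have := le_of_mul_le_mul_left h3 hlam0
  exact this

lemma coord_abs_le_pilp_norm (p : ℝ≥0∞) [Fact (1 ≤ p)] {ι : Type*} [Fintype ι]
    (c : ι → ℝ) (j : ι) : |c j| ≤ ‖(WithLp.equiv p (ι → ℝ)).symm c‖ := by
  have hp1 : 1 ≤ p := Fact.out
  have hp0 : p ≠ 0 := (lt_of_lt_of_le zero_lt_one hp1).ne'
  rcases eq_or_ne p ∞ with rfl | hptop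
  · rw [PiLp.norm_eq_ciSup]
    calc |c j| = ‖((WithLp.equiv ∞ (ι → ℝ)).symm c) j‖ := (Real.norm_eq_abs _).symm
      _ ≤ ⨆ i, ‖((WithLp.equiv ∞ (ι → ℝ)).symm c) i‖ :=
        le_ciSup (f := fun i => ‖((WithLp.equiv ∞ (ι → ℝ)).symm c) i‖)
          (Set.Finite.bddAbove (Set.finite_range _)) j
  · have hpt : 0 < p.toReal := ENNReal.toReal_pos hp0 hptop
    rw [PiLp.norm_eq_sum hpt]
    have h1 : |c j| = (|c j| ^ p.toReal) ^ (1/p.toReal) := by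
      rw [one_div, Real.rpow_rpow_inv (abs_nonneg _) hpt.ne']
    rw [h1]
    apply Real.rpow_le_rpow (by positivity) _ (by positivity)
    have := Finset.single_le_sum
      (f := fun i => ‖((WithLp.equiv p (ι → ℝ)).symm c) i‖ ^ p.toReal)
      (fun i _ => by positivity) (Finset.mem_univ j)
    simpa [Real.norm_eq_abs] using this

lemma sum_abs_le_card_rpow_mul_pilp_norm (p q : ℝ≥0∞) [Fact (1 ≤ p)]
    (hpq : 1/p + 1/q = 1) {ι : Type*} [Fintype ι] (c : ι → ℝ) (s : Finset ι) :
    ∑ j ∈ s, |c j| ≤ (s.card : ℝ) ^ (1/q).toReal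
      * ‖(WithLp.equiv p (ι → ℝ)).symm c‖ := by
  have hp1 : 1 ≤ p := Fact.out
  have hp0 : p ≠ 0 := (lt_of_lt_of_le zero_lt_one hp1).ne'
  rcases eq_or_ne p ∞ with rfl | hptop
  · have hq : q = 1 := by
      rw [show (1:ℝ≥0∞)/∞ = 0 by simp, zero_add, one_div] at hpq
      rwa [ENNReal.inv_eq_one] at hpq
    subst hq
    rw [show ((1:ℝ≥0∞)/1).toReal = 1 by norm_num, Real.rpow_one]
    calc ∑ j ∈ s, |c j| ≤ ∑ _j ∈ s, ‖(WithLp.equiv ∞ (ι → ℝ)).symm c‖ :=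
          Finset.sum_le_sum fun j _ => coord_abs_le_pilp_norm ∞ c j
      _ = (s.card : ℝ) * ‖(WithLp.equiv ∞ (ι → ℝ)).symm c‖ := by
          rw [Finset.sum_const, nsmul_eq_mul]
  rcases eq_or_ne p 1 with rfl | hp1'
  · have hq : q = ∞ := by
      rw [show (1:ℝ≥0∞)/1 = 1 by simp] at hpq
      have h0 : 1/q = 0 := by
        by_contra h
        have hlt := ENNReal.lt_add_right ENNReal.one_ne_top h
        rw [hpq] at hlt
        exact lt_irrefl _ hlt
      rw [one_div, ENNReal.inv_eq_zero] at h0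
      exact h0
    subst hq
    rw [show ((1:ℝ≥0∞)/∞).toReal = 0 by simp, Real.rpow_zero, one_mul]
    have hnorm : ‖(WithLp.equiv 1 (ι → ℝ)).symm c‖ = ∑ i, |c i| := by
      rw [PiLp.norm_eq_sum (by norm_num : 0 < (1:ℝ≥0∞).toReal)]
      simp [Real.norm_eq_abs, ENNReal.toReal_one, Real.rpow_one]
    rw [hnorm]
    exact Finset.sum_le_sum_of_subset_of_nonneg (Finset.subset_univ s)
      (fun _ _ _ => abs_nonneg _)
  · -- 1 < p < ∞
    have hq0 : q ≠ 0 := by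
      intro h
      rw [h] at hpq
      simp at hpq
    have hqtop : q ≠ ∞ := by
      intro h
      rw [h] at hpq
      simp at hpq
      exact hp1' (by rw [← hpq])
    have hpt : 0 < p.toReal := ENNReal.toReal_pos hp0 hptop
    have hqt : 0 < q.toReal := ENNReal.toReal_pos hq0 hqtop
    have hptR : 1 < p.toReal := by
      have := ENNReal.toReal_lt_toReal (a := (1:ℝ≥0∞)) ENNReal.one_ne_top hptop
      rw [ENNReal.toReal_one] at this
      exact this.mpr (lt_of_le_of_ne hp1 (Ne.symm hp1'))
    have hsum : p.toReal⁻¹ + q.toReal⁻¹ = 1 := by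
      have h1 : ((1/p + 1/q : ℝ≥0∞)).toReal = 1 := by rw [hpq]; simp
      rw [ENNReal.toReal_add (by simp [hp0]) (by simp [hq0])] at h1
      rw [← ENNReal.toReal_inv, ← ENNReal.toReal_inv]
      simpa [one_div] using h1
    have hconj : Real.HolderConjugate p.toReal q.toReal := ⟨by rw [inv_one]; exact hsum, hpt, hqt⟩
    have hqe : (1/q).toReal = 1/q.toReal := by
      rw [one_div, ENNReal.toReal_inv, one_div]
    calc ∑ j ∈ s, |c j| = ∑ j ∈ s, |c j| * 1 := by simp
      _ ≤ (∑ j ∈ s, |c j| ^ p.toReal) ^ (1/p.toReal)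
            * (∑ _j ∈ s, (1:ℝ) ^ q.toReal) ^ (1/q.toReal) :=
          Real.inner_le_Lp_mul_Lq_of_nonneg s hconj (fun _ _ => abs_nonneg _)
            (fun _ _ => zero_le_one)
      _ = (∑ j ∈ s, |c j| ^ p.toReal) ^ (1/p.toReal) * (s.card : ℝ) ^ (1/q.toReal) := by
          simp [Real.one_rpow]
      _ ≤ ‖(WithLp.equiv p (ι → ℝ)).symm c‖ * (s.card : ℝ) ^ (1/q.toReal) := by
          apply mul_le_mul_of_nonneg_right _ (by positivity)
          rw [PiLp.norm_eq_sum hpt]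
          apply Real.rpow_le_rpow (Finset.sum_nonneg fun _ _ => by positivity) _
            (by positivity)
          calc ∑ j ∈ s, |c j| ^ p.toReal ≤ ∑ j, |c j| ^ p.toReal :=
                Finset.sum_le_sum_of_subset_of_nonneg (Finset.subset_univ s)
                  (fun _ _ _ => by positivity)
            _ = ∑ i, ‖((WithLp.equiv p (ι → ℝ)).symm c) i‖ ^ p.toReal := by
                simp [Real.norm_eq_abs]
      _ = (s.card : ℝ) ^ (1/q).toReal * ‖(WithLp.equiv p (ι → ℝ)).symm c‖ := by
          rw [hqe]; ring

def trigCoord {d : ℕ} (Ωp : Finset (Fin d → ℝ)) (y : Fin d → ℝ) :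
    Unit ⊕ ({ω // ω ∈ Ωp} × Bool) → ℝ
  | Sum.inl _ => 1/2
  | Sum.inr (ω, false) => Real.cos (dot ω.1 y)
  | Sum.inr (ω, true) => Real.sin (dot ω.1 y)

lemma abs_trigCoord_le_one {d : ℕ} (Ωp : Finset (Fin d → ℝ)) (y : Fin d → ℝ)
    (j : Unit ⊕ ({ω // ω ∈ Ωp} × Bool)) : |trigCoord Ωp y j| ≤ 1 := by
  rcases j with u | ⟨ω, b⟩
  · rw [show trigCoord Ωp y (Sum.inl u) = 1/2 from rfl,
      abs_of_nonneg (by norm_num : (0:ℝ) ≤ 1/2)]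
    norm_num
  · cases b
    · exact le_trans (le_of_eq rfl) (Real.abs_cos_le_one _)
    · exact le_trans (le_of_eq rfl) (Real.abs_sin_le_one _)

lemma gtp_eq_sum {d : ℕ} (Ωp : Finset (Fin d → ℝ)) (a0 : ℝ) (a b : (Fin d → ℝ) → ℝ)
    (y : Fin d → ℝ) :
    gtp Ωp a0 a b y = ∑ j, coeffVec Ωp a0 a b j * trigCoord Ωp y j := by
  rw [Fintype.sum_sum_type]
  unfold gtp
  congr 1
  · simp [coeffVec, trigCoord]
    ring
  · rw [Fintype.sum_prod_type]
    rw [← Finset.sum_attach Ωp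
      (fun ω => a ω * Real.cos (dot ω y) + b ω * Real.sin (dot ω y))]
    rw [Finset.univ_eq_attach]
    apply Finset.sum_congr rfl
    intro ω _
    rw [Fintype.sum_bool]
    simp [coeffVec, trigCoord]
    ring

end RadAux


/-- Empirical Rademacher complexity bound for the class `H_Ω^{B̃,p}`
with `p`-norm-bounded coefficients, where `1/p + 1/q = 1` and `|Ω| = 2|Ω₊| + 1`:
`R̂(H_Ω^{B̃,p}) ≤ B̃/√m + 2·B̃·|Ω|^{1/q}·√(2·log|Ω|)/√m`
(with `|Ω|^{1/q}` interpreted as `1` when `q = ∞`). -/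
theorem rademacher_bound_gtp_pnorm
    (p q : ℝ≥0∞) [Fact (1 ≤ p)] (hpq : 1 / p + 1 / q = 1)
    (d : ℕ) (hd : 1 ≤ d) (Ωp : Finset (Fin d → ℝ)) (hne : Ωp.Nonempty)
    (hzero : ∀ ω ∈ Ωp, ω ≠ 0) (hasym : ∀ ω ∈ Ωp, -ω ∉ Ωp)
    (Bt : ℝ) (hBt : 0 < Bt)
    (m : ℕ) (hm : 1 ≤ m) (x : Fin m → Fin d → ℝ) (hx : ∀ i, x i ∈ box d) :
    empRad (HclassP p Ωp Bt) x ≤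
      Bt / Real.sqrt m +
        2 * Bt * ((2 * Ωp.card + 1 : ℝ) ^ (1 / q).toReal) *
          Real.sqrt (2 * Real.log (2 * Ωp.card + 1)) / Real.sqrt m := by
  classical
  haveI hsub : Nonempty {ω // ω ∈ Ωp} := ⟨⟨hne.choose, hne.choose_spec⟩⟩
  have hN : 1 ≤ Ωp.card := Finset.card_pos.mpr hne
  have hNR : (1:ℝ) ≤ Ωp.card := by exact_mod_cast hN
  set n : ℝ := (2 * Ωp.card + 1 : ℝ) with hndef
  have hn3 : (3:ℝ) ≤ n := by rw [hndef]; linarith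
  have hlogn : 0 ≤ Real.log n := Real.log_nonneg (by linarith)
  set e : ℝ := (1/q).toReal with hedef
  have he0 : 0 ≤ e := ENNReal.toReal_nonneg
  have hne0 : (0:ℝ) ≤ n ^ e := Real.rpow_nonneg (by linarith) e
  have hm0 : (0:ℝ) < m := by exact_mod_cast hm
  set u : (({ω // ω ∈ Ωp} × Bool) × Bool) → Fin m → ℝ :=
    fun jb i => signOf jb.2 * trigCoord Ωp (x i) (Sum.inr jb.1) with hudef
  have hcardJ : Fintype.card ((({ω // ω ∈ Ωp} × Bool) × Bool)) = 4 * Ωp.card := by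
    simp only [Fintype.card_prod, Fintype.card_bool, Fintype.card_coe]
    ring
  have hJ2 : 2 ≤ Fintype.card ((({ω // ω ∈ Ωp} × Bool) × Bool)) := by
    rw [hcardJ]; omega
  have hu : ∀ j, ∑ i, (u j i)^2 ≤ (m:ℝ) := by
    intro j
    calc ∑ i, (u j i)^2 ≤ ∑ _i : Fin m, (1:ℝ) := by
          apply Finset.sum_le_sum
          intro i _
          have h1 : (u j i)^2 = (trigCoord Ωp (x i) (Sum.inr j.1))^2 := by
            simp only [hudef]
            rcases j with ⟨k, b⟩
            cases b <;> simp only [signOf_true, signOf_false] <;> ring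
          rw [h1]
          nlinarith [abs_trigCoord_le_one Ωp (x i) (Sum.inr j.1),
            abs_nonneg (trigCoord Ωp (x i) (Sum.inr j.1)),
            sq_abs (trigCoord Ωp (x i) (Sum.inr j.1))]
      _ = (m:ℝ) := by simp
  set v : (Fin m → Bool) → (Unit ⊕ ({ω // ω ∈ Ωp} × Bool)) → ℝ :=
    fun σ j => ∑ i, signOf (σ i) * trigCoord Ωp (x i) j with hvdef
  set M : (Fin m → Bool) → ℝ := fun σ =>
    Finset.univ.sup' Finset.univ_nonempty
      (fun j : (({ω // ω ∈ Ωp} × Bool) × Bool) => ∑ i, signOf (σ i) * u j i) with hMdef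
  have hMabs : ∀ σ (k : {ω // ω ∈ Ωp} × Bool), |v σ (Sum.inr k)| ≤ M σ := by
    intro σ k
    have htrue : ∑ i, signOf (σ i) * u (k, true) i = v σ (Sum.inr k) := by
      simp only [hvdef, hudef]
      apply Finset.sum_congr rfl
      intro i _
      rw [signOf_true]; ring
    have hfalse : ∑ i, signOf (σ i) * u (k, false) i = - v σ (Sum.inr k) := by
      simp only [hvdef, hudef]
      rw [← Finset.sum_neg_distrib]
      apply Finset.sum_congr rfl
      intro i _
      rw [signOf_false]; ring
    rw [abs_le]
    constructor
    · have h := Finset.le_sup'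
        (fun j : (({ω // ω ∈ Ωp} × Bool) × Bool) => ∑ i, signOf (σ i) * u j i)
        (Finset.mem_univ (k, false))
      rw [hfalse] at h
      rw [hMdef]
      simp only []
      linarith [h]
    · have h := Finset.le_sup'
        (fun j : (({ω // ω ∈ Ωp} × Bool) × Bool) => ∑ i, signOf (σ i) * u j i)
        (Finset.mem_univ (k, true))
      rw [htrue] at h
      rw [hMdef]
      exact h
  have hM0 : ∀ σ, 0 ≤ M σ := fun σ =>
    le_trans (abs_nonneg _) (hMabs σ (Classical.arbitrary _))
  have hsup : ∀ σ : Fin m → Bool,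
      sSup ((fun f => (1 / (m:ℝ)) * ∑ i, signOf (σ i) * f (x i)) '' HclassP p Ωp Bt)
        ≤ (Bt/m) * (|v σ (Sum.inl ())| + n^e * M σ) := by
    intro σ
    apply Real.sSup_le
    · rintro y ⟨f, hf, rfl⟩
      obtain ⟨a0, a, b, hc, rfl⟩ := hf
      set c : (Unit ⊕ ({ω // ω ∈ Ωp} × Bool)) → ℝ := coeffVec Ωp a0 a b with hcdef
      have hc' : ‖(WithLp.equiv p ((Unit ⊕ ({ω // ω ∈ Ωp} × Bool)) → ℝ)).symm c‖ ≤ Bt := hc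
      have hswap : ∑ i, signOf (σ i) * gtp Ωp a0 a b (x i) = ∑ j, c j * v σ j := by
        calc ∑ i, signOf (σ i) * gtp Ωp a0 a b (x i)
            = ∑ i, ∑ j, c j * (signOf (σ i) * trigCoord Ωp (x i) j) := by
              apply Finset.sum_congr rfl; intro i _
              rw [gtp_eq_sum, Finset.mul_sum]
              apply Finset.sum_congr rfl; intro j _; ring
          _ = ∑ j, ∑ i, c j * (signOf (σ i) * trigCoord Ωp (x i) j) := Finset.sum_comm
          _ = ∑ j, c j * v σ j := by
              apply Finset.sum_congr rfl; intro j _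
              simp only [hvdef]
              rw [Finset.mul_sum]
      have hkey : ∑ j, c j * v σ j ≤ Bt * |v σ (Sum.inl ())| + Bt * (n^e * M σ) := by
        rw [Fintype.sum_sum_type]
        have h0 : ∑ t : Unit, c (Sum.inl t) * v σ (Sum.inl t) ≤ Bt * |v σ (Sum.inl ())| := by
          rw [Finset.univ_unique, Finset.sum_singleton]
          calc c (Sum.inl default) * v σ (Sum.inl default)
              ≤ |c (Sum.inl default) * v σ (Sum.inl default)| := le_abs_self _
            _ = |c (Sum.inl ())| * |v σ (Sum.inl ())| := by rw [abs_mul]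
            _ ≤ Bt * |v σ (Sum.inl ())| :=
                mul_le_mul_of_nonneg_right
                  (le_trans (coord_abs_le_pilp_norm p c _) hc') (abs_nonneg _)
        have h1 : ∑ k : {ω // ω ∈ Ωp} × Bool, c (Sum.inr k) * v σ (Sum.inr k)
            ≤ Bt * (n^e * M σ) := by
          have hsum_abs : ∑ k : {ω // ω ∈ Ωp} × Bool, |c (Sum.inr k)| ≤ n^e * Bt := by
            have hh := sum_abs_le_card_rpow_mul_pilp_norm p q hpq c
              ((Finset.univ : Finset ({ω // ω ∈ Ωp} × Bool)).map
                ⟨Sum.inr, Sum.inr_injective⟩)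
            rw [Finset.sum_map] at hh
            simp only [Function.Embedding.coeFn_mk] at hh
            have hcard : ((((Finset.univ : Finset ({ω // ω ∈ Ωp} × Bool)).map
                (⟨Sum.inr, Sum.inr_injective⟩ : ({ω // ω ∈ Ωp} × Bool) ↪
                  (Unit ⊕ ({ω // ω ∈ Ωp} × Bool)))).card) : ℝ) = 2 * Ωp.card := by
              rw [Finset.card_map, Finset.card_univ]
              simp only [Fintype.card_prod, Fintype.card_bool, Fintype.card_coe]
              push_cast; ring
            rw [hcard] at hh
            calc ∑ k : {ω // ω ∈ Ωp} × Bool, |c (Sum.inr k)|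
                ≤ (2*(Ωp.card:ℝ))^e
                    * ‖(WithLp.equiv p ((Unit ⊕ ({ω // ω ∈ Ωp} × Bool)) → ℝ)).symm c‖ := hh
              _ ≤ n^e * Bt := by
                  apply mul_le_mul
                    (Real.rpow_le_rpow (by positivity) (by rw [hndef]; linarith) he0)
                    hc' (norm_nonneg _) hne0
          calc ∑ k : {ω // ω ∈ Ωp} × Bool, c (Sum.inr k) * v σ (Sum.inr k)
              ≤ ∑ k : {ω // ω ∈ Ωp} × Bool, |c (Sum.inr k)| * M σ := by
                apply Finset.sum_le_sum; intro k _
                calc c (Sum.inr k) * v σ (Sum.inr k)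
                    ≤ |c (Sum.inr k) * v σ (Sum.inr k)| := le_abs_self _
                  _ = |c (Sum.inr k)| * |v σ (Sum.inr k)| := abs_mul _ _
                  _ ≤ |c (Sum.inr k)| * M σ :=
                      mul_le_mul_of_nonneg_left (hMabs σ k) (abs_nonneg _)
            _ = (∑ k : {ω // ω ∈ Ωp} × Bool, |c (Sum.inr k)|) * M σ := by
                rw [Finset.sum_mul]
            _ ≤ (n^e * Bt) * M σ := mul_le_mul_of_nonneg_right hsum_abs (hM0 σ)
            _ = Bt * (n^e * M σ) := by ring
        linarith [h0, h1]
      calc (1/(m:ℝ)) * ∑ i, signOf (σ i) * gtp Ωp a0 a b (x i)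
          = (1/(m:ℝ)) * ∑ j, c j * v σ j := by rw [hswap]
        _ ≤ (1/(m:ℝ)) * (Bt * |v σ (Sum.inl ())| + Bt * (n^e * M σ)) :=
            mul_le_mul_of_nonneg_left hkey (by positivity)
        _ = (Bt/m) * (|v σ (Sum.inl ())| + n^e * M σ) := by ring
    · exact mul_nonneg (div_nonneg hBt.le hm0.le)
        (add_nonneg (abs_nonneg _) (mul_nonneg hne0 (hM0 σ)))
  have hv0 : ∀ σ : Fin m → Bool, |v σ (Sum.inl ())| = |∑ i, signOf (σ i)| * (1/2) := by
    intro σ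
    simp only [hvdef]
    rw [show (∑ i, signOf (σ i) * trigCoord Ωp (x i) (Sum.inl ()))
        = (∑ i, signOf (σ i)) * (1/2) by
      rw [Finset.sum_mul]; rfl]
    rw [abs_mul, abs_of_nonneg (by norm_num : (0:ℝ) ≤ 1/2)]
  have hS1 : (1/2^m : ℝ) * ∑ σ : Fin m → Bool, |v σ (Sum.inl ())| ≤ Real.sqrt m / 2 := by
    calc (1/2^m:ℝ) * ∑ σ : Fin m → Bool, |v σ (Sum.inl ())|
        = ((1/2^m:ℝ) * ∑ σ : Fin m → Bool, |∑ i, signOf (σ i)|) * (1/2) := by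
          rw [Finset.sum_congr rfl (fun σ _ => hv0 σ), ← Finset.sum_mul]; ring
      _ ≤ Real.sqrt m * (1/2) :=
          mul_le_mul_of_nonneg_right (avg_abs_sum_signOf m) (by norm_num)
      _ = Real.sqrt m / 2 := by ring
  have hcardJR : ((Fintype.card ((({ω // ω ∈ Ωp} × Bool) × Bool)) : ℕ) : ℝ)
      = 4 * Ωp.card := by exact_mod_cast hcardJ
  have hS2 : (1/2^m : ℝ) * ∑ σ : Fin m → Bool, M σ
      ≤ 2 * Real.sqrt (2 * m * Real.log n) := by
    have h1 : (1/2^m : ℝ) * ∑ σ : Fin m → Bool, M σ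
        ≤ Real.sqrt (2 * m * Real.log
            (Fintype.card ((({ω // ω ∈ Ωp} × Bool) × Bool)))) := by
      rw [hMdef]
      exact massart_avg hm hJ2 u hu
    have hlogJ : Real.log ((Fintype.card ((({ω // ω ∈ Ωp} × Bool) × Bool)) : ℝ))
        ≤ 2 * Real.log n := by
      have hle : ((Fintype.card ((({ω // ω ∈ Ωp} × Bool) × Bool)) : ℕ) : ℝ) ≤ n^2 := by
        rw [hcardJR, hndef]; nlinarith [hNR]
      calc Real.log ((Fintype.card ((({ω // ω ∈ Ωp} × Bool) × Bool)) : ℝ))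
          ≤ Real.log (n^2) := Real.log_le_log (by rw [hcardJR]; positivity) hle
        _ = 2 * Real.log n := by rw [Real.log_pow]; norm_num
    calc (1/2^m:ℝ) * ∑ σ : Fin m → Bool, M σ
        ≤ Real.sqrt (2 * m * Real.log
            (Fintype.card ((({ω // ω ∈ Ωp} × Bool) × Bool)))) := h1
      _ ≤ Real.sqrt (2^2 * (2 * m * Real.log n)) := by
          apply Real.sqrt_le_sqrt
          nlinarith [hm0.le, hlogn, hlogJ]
      _ = 2 * Real.sqrt (2 * m * Real.log n) := by
          rw [Real.sqrt_mul (by norm_num : (0:ℝ) ≤ 2^2),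
            Real.sqrt_sq (by norm_num : (0:ℝ) ≤ 2)]
  have final : (Bt/m) * (Real.sqrt m/2 + n^e * (2 * Real.sqrt (2*m*Real.log n)))
      ≤ Bt / Real.sqrt m + 2*Bt*n^e*Real.sqrt (2*Real.log n)/Real.sqrt m := by
    have hs0 : 0 < Real.sqrt m := Real.sqrt_pos.mpr hm0
    have hsplit : Real.sqrt (2*(m:ℝ)*Real.log n)
        = Real.sqrt m * Real.sqrt (2*Real.log n) := by
      rw [show 2*(m:ℝ)*Real.log n = m * (2*Real.log n) by ring, Real.sqrt_mul hm0.le]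
    rw [hsplit]
    set s := Real.sqrt m with hsdef
    set t := Real.sqrt (2*Real.log n) with htdef
    have ht0 : 0 ≤ t := Real.sqrt_nonneg _
    have hss : s * s = (m:ℝ) := Real.mul_self_sqrt hm0.le
    have heq : Bt/(m:ℝ) * (s/2 + n^e*(2*(s*t))) = Bt/(2*s) + 2*Bt*n^e*t/s := by
      rw [← hss]
      field_simp
    rw [heq]
    have h2 : Bt/(2*s) ≤ Bt/s := div_le_div_of_nonneg_left hBt.le hs0 (by linarith)
    linarith
  calc empRad (HclassP p Ωp Bt) x
      ≤ (1/2^m : ℝ) * ∑ σ : Fin m → Bool,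
          (Bt/m) * (|v σ (Sum.inl ())| + n^e * M σ) := by
        unfold empRad
        exact mul_le_mul_of_nonneg_left
          (Finset.sum_le_sum fun σ _ => hsup σ) (by positivity)
    _ = (Bt/m) * ((1/2^m:ℝ) * ∑ σ : Fin m → Bool, |v σ (Sum.inl ())|
          + n^e * ((1/2^m:ℝ) * ∑ σ : Fin m → Bool, M σ)) := by
        rw [show ∑ σ : Fin m → Bool, (Bt/m) * (|v σ (Sum.inl ())| + n^e * M σ)
            = (Bt/m) * ((∑ σ : Fin m → Bool, |v σ (Sum.inl ())|)
              + n^e * (∑ σ : Fin m → Bool, M σ)) by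
          rw [← Finset.mul_sum, Finset.sum_add_distrib, ← Finset.mul_sum]]
        ring
    _ ≤ (Bt/m) * (Real.sqrt m / 2 + n^e * (2 * Real.sqrt (2*m*Real.log n))) := by
        apply mul_le_mul_of_nonneg_left _ (by positivity)
        exact add_le_add hS1 (mul_le_mul_of_nonneg_left hS2 hne0)
    _ ≤ Bt / Real.sqrt m + 2*Bt*n^e*Real.sqrt (2*Real.log n)/Real.sqrt m := final
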